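/- arXiv:2105.10593 — 2 statements merged into one kernel-verified Lean document; each statement's English description precedes it below -/
import Mathlib

section
/- Let (K,v) be a valued field with angular component map ac, and a,b,c ∈ K with v(a-b) = v(a-c) = v(c-b). Then ac(a-c) = ac(a-b) - ac(c-b). -/
lemma AddValuation.map_div_eq_zero_of_map_eq {K Γ₀ : Type*} [Field K]
    [LinearOrderedAddCommGroupWithTop Γ₀] (v : AddValuation K Γ₀) {x y : K}
    (hy : y ≠ 0) (h : v x = v y) : v (x / y) = 0 := by
  rw [v.map_div, h, LinearOrderedAddCommGroupWithTop.sub_self_eq_zero_iff_ne_top]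
  exact v.ne_top_iff.2 hy

section AngularComponent

variable {K Γ k : Type*} [Field K] [AddCommGroup Γ] [LinearOrder Γ] [IsOrderedAddMonoid Γ]
  [Field k] (v : AddValuation K (WithTop Γ))

/-- The residue map is additive on the valuation ring, so `ac` is additive on any pair `x, y`
for which `x / y` and `x / y + 1` are both units of the valuation ring. -/
lemma angularComponent_add_of_map_eq (res ac : K → k)
    (hres_add : ∀ x y : K, 0 ≤ v x → 0 ≤ v y → res (x + y) = res x + res y)
    (hres_one : res 1 = 1) (hac_zero : ac 0 = 0) (hac_mul : ∀ x y : K, ac (x * y) = ac x * ac y)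
    (hac_res : ∀ x : K, v x = 0 → ac x = res x)
    {x y : K} (hxy : v x = v y) (hsum : v (x + y) = v y) :
    ac (x + y) = ac x + ac y := by
  rcases eq_or_ne y 0 with rfl | hy
  · rw [v.map_zero, v.top_iff] at hxy
    simp [hxy, hac_zero]
  have hs_one : v (x / y + 1) = 0 := by
    rw [div_add_one hy]
    exact v.map_div_eq_zero_of_map_eq hy hsum
  set s := x / y
  have hs : v s = 0 := v.map_div_eq_zero_of_map_eq hy hxy
  have hres : res (s + 1) = res s + 1 := by
    rw [hres_add s 1 hs.ge (by rw [v.map_one]), hres_one]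
  calc ac (x + y) = ac ((s + 1) * y) := by rw [add_mul, one_mul, div_mul_cancel₀ x hy]
    _ = (res s + 1) * ac y := by rw [hac_mul, hac_res _ hs_one, hres]
    _ = ac (s * y) + ac y := by rw [hac_mul, hac_res s hs]; ring
    _ = ac x + ac y := by rw [div_mul_cancel₀ x hy]

end AngularComponent

theorem stmt3_general {K : Type*} [Field K] {Γ : Type*} [AddCommGroup Γ] [LinearOrder Γ] [IsOrderedAddMonoid Γ]
    {k : Type*} [Field k]
    (v : AddValuation K (WithTop Γ)) (res : K → k) (ac : K → k)
    -- `res` is the residue map onto the residue field `k = Kv`: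
    (hres_add : ∀ x y : K, 0 ≤ v x → 0 ≤ v y → res (x + y) = res x + res y)
    (hres_one : res 1 = 1)
    -- `ac` is an angular component map:
    (hac_zero : ac 0 = 0)
    (hac_mul : ∀ x y : K, ac (x * y) = ac x * ac y)
    (hac_res : ∀ x : K, v x = 0 → ac x = res x)
    (a b c : K) (h1 : v (a - b) = v (a - c)) (h2 : v (a - c) = v (c - b)) :
    ac (a - c) = ac (a - b) - ac (c - b) := by
  have hsum : (a - c) + (c - b) = a - b := by ring
  have hadd := angularComponent_add_of_map_eq v res ac hres_add hres_one hac_zero hac_mul hac_res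
    h2 (by rw [hsum, h1, h2])
  rw [hsum] at hadd
  rw [hadd, add_sub_cancel_right]

/-- Let `(K,v)` be a valued field with angular component map `ac`,
and `a, b, c ∈ K` with `v(a-b) = v(a-c) = v(c-b)`.
Then `ac(a-c) = ac(a-b) - ac(c-b)`. -/
theorem stmt3 {K : Type*} [Field K] {Γ : Type*} [AddCommGroup Γ] [LinearOrder Γ] [IsOrderedAddMonoid Γ]
    {k : Type*} [Field k]
    (v : AddValuation K (WithTop Γ)) (res : K → k) (ac : K → k)
    -- `res` is the residue map onto the residue field `k = Kv`:
    (hres_add : ∀ x y : K, 0 ≤ v x → 0 ≤ v y → res (x + y) = res x + res y)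
    (hres_mul : ∀ x y : K, 0 ≤ v x → 0 ≤ v y → res (x * y) = res x * res y)
    (hres_one : res 1 = 1)
    (hres_eq_zero_iff : ∀ x : K, 0 ≤ v x → (res x = 0 ↔ 0 < v x))
    (hres_surj : ∀ r : k, ∃ x : K, 0 ≤ v x ∧ res x = r)
    -- `ac` is an angular component map:
    (hac_zero : ac 0 = 0)
    (hac_mul : ∀ x y : K, ac (x * y) = ac x * ac y)
    (hac_res : ∀ x : K, v x = 0 → ac x = res x)
    (a b c : K) (h1 : v (a - b) = v (a - c)) (h2 : v (a - c) = v (c - b)) :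
    ac (a - c) = ac (a - b) - ac (c - b) :=
  stmt3_general v res ac hres_add hres_one hac_zero hac_mul hac_res a b c h1 h2
end

section
/- Let (K,v) be a valued field, (L,w) an extension, and x ∈ L. If there exists a ∈ K such that γ := w(x-a) ∈ vK is the maximum of {w(x-k) : k ∈ K}, and ac is an angular component map on L, then the residue ac(x-a) does not lie in the image of the residue field of K in Lw. -/
/-! The residue `ac (x - a)` is nonzero, so if it came from the residue field of `K`, the
orthogonality property would give `b ∈ K` with the same value and angular component as `x - a`.
Then `(x - a) / b` has value `0` and residue `1`, so `x - (a + b)` has value strictly larger than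
`w (x - a)`, contradicting the maximality of `w (x - a)`. -/

section ResidueMap

variable {L : Type*} [Ring L] {Γ : Type*} [AddCommGroup Γ] [LinearOrder Γ] [IsOrderedAddMonoid Γ]
  {k : Type*} [AddGroupWithOne k] (w : AddValuation L (WithTop Γ)) (res : L → k)

theorem AddValuation.map_sub_one_pos_of_res_eq_one
    (hres_add : ∀ x y : L, 0 ≤ w x → 0 ≤ w y → res (x + y) = res x + res y)
    (hres_one : res 1 = 1)
    (hres_eq_zero_iff : ∀ x : L, 0 ≤ w x → (res x = 0 ↔ 0 < w x))
    {y : L} (hy : w y = 0) (hres : res y = 1) : 0 < w (y - 1) := by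
  have hw_sub : 0 ≤ w (y - 1) := by
    simpa [hy] using w.map_sub y 1
  refine (hres_eq_zero_iff _ hw_sub).mp ?_
  have h := hres_add (y - 1) 1 hw_sub w.map_one.ge
  rw [sub_add_cancel, hres, hres_one] at h
  exact add_eq_right.mp h.symm

end ResidueMap

section AngularComponent

variable {L : Type*} [Field L] {Γ : Type*} [AddCommGroup Γ] [LinearOrder Γ] [IsOrderedAddMonoid Γ]
  {k : Type*} [Field k] (w : AddValuation L (WithTop Γ)) (res : L → k) (ac : L → k)

theorem AddValuation.ac_ne_zero_of_ne_zero
    (hac_mul : ∀ x y : L, ac (x * y) = ac x * ac y)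
    (hac_res : ∀ x : L, w x = 0 → ac x = res x) (hres_one : res 1 = 1)
    {y : L} (hy : y ≠ 0) : ac y ≠ 0 := by
  intro h
  have h1 : ac y * ac y⁻¹ = 1 := by
    rw [← hac_mul, mul_inv_cancel₀ hy, hac_res 1 w.map_one, hres_one]
  simp [h] at h1

theorem AddValuation.lt_map_sub_of_ac_eq
    (hres_add : ∀ x y : L, 0 ≤ w x → 0 ≤ w y → res (x + y) = res x + res y)
    (hres_one : res 1 = 1)
    (hres_eq_zero_iff : ∀ x : L, 0 ≤ w x → (res x = 0 ↔ 0 < w x))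
    (hac_mul : ∀ x y : L, ac (x * y) = ac x * ac y)
    (hac_res : ∀ x : L, w x = 0 → ac x = res x)
    {z b : L} (hb : b ≠ 0) (hw : w z = w b) (hac : ac z = ac b) : w z < w (z - b) := by
  let y := z * b⁻¹
  have hy_val : w y = 0 := by
    rw [w.map_mul, w.map_inv, hw, LinearOrderedAddCommGroupWithTop.add_neg_cancel_of_ne_top
      ((w.ne_top_iff).mpr hb)]
  have hy_ac : ac y = 1 := by
    have h : ac y * ac b = 1 * ac b := by
      rw [← hac_mul, inv_mul_cancel_right₀ hb, hac, one_mul]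
    exact mul_right_cancel₀ (w.ac_ne_zero_of_ne_zero res ac hac_mul hac_res hres_one hb) h
  have hy_close : 0 < w (y - 1) :=
    w.map_sub_one_pos_of_res_eq_one res hres_add hres_one hres_eq_zero_iff hy_val
      (by rw [← hac_res y hy_val, hy_ac])
  have hz_sub : z - b = b * (y - 1) := by
    rw [mul_sub, mul_one, mul_comm, inv_mul_cancel_right₀ hb]
  calc w z = w b + 0 := by rw [hw, add_zero]
    _ < w b + w (y - 1) := WithTop.add_lt_add_left ((w.ne_top_iff).mpr hb) hy_close
    _ = w (z - b) := by rw [hz_sub, w.map_mul]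

end AngularComponent

theorem stmt14_general {L : Type*} [Field L] {Γ : Type*} [AddCommGroup Γ] [LinearOrder Γ] [IsOrderedAddMonoid Γ]
    {k : Type*} [Field k]
    (w : AddValuation L (WithTop Γ)) (res : L → k) (ac : L → k)
    -- `res` is the residue map onto the residue field `k = Lw`:
    (hres_add : ∀ x y : L, 0 ≤ w x → 0 ≤ w y → res (x + y) = res x + res y)
    (hres_one : res 1 = 1)
    (hres_eq_zero_iff : ∀ x : L, 0 ≤ w x → (res x = 0 ↔ 0 < w x))
    -- `ac` is an angular component map:
    (hac_mul : ∀ x y : L, ac (x * y) = ac x * ac y)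
    (hac_res : ∀ x : L, w x = 0 → ac x = res x)
    (K : Subfield L) (x : L) (a : L) (ha : a ∈ K)
    -- `γ = w(x-a)` lies in `vK`:
    (hγ : ∃ u ∈ K, u ≠ 0 ∧ w u = w (x - a))
    -- and is the maximum of `{w(x-k) : k ∈ K}`:
    (hmax : ∀ b ∈ K, w (x - b) ≤ w (x - a))
    -- Fact (orthogonality) for the subfield `K`:
    (horth : ∀ γ : WithTop Γ, (∃ u ∈ K, u ≠ 0 ∧ w u = γ) →
      ∀ r : k, r ≠ 0 → (∃ c ∈ K, 0 ≤ w c ∧ res c = r) →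
      ∃ b ∈ K, w b = γ ∧ ac b = r) :
    ¬ ∃ c ∈ K, 0 ≤ w c ∧ res c = ac (x - a) := by
  rintro ⟨c, hcK, hc_val, hc_res⟩
  obtain ⟨u, huK, hu0, hu_val⟩ := hγ
  have hxa : x - a ≠ 0 := by
    rw [← w.ne_top_iff, ← hu_val, w.ne_top_iff]
    exact hu0
  obtain ⟨b, hbK, hb_val, hb_ac⟩ := horth (w (x - a)) ⟨u, huK, hu0, hu_val⟩ (ac (x - a))
    (w.ac_ne_zero_of_ne_zero res ac hac_mul hac_res hres_one hxa) ⟨c, hcK, hc_val, hc_res⟩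
  have hb0 : b ≠ 0 := by
    rw [← w.ne_top_iff, hb_val, w.ne_top_iff]
    exact hxa
  have hcloser : w (x - a) < w (x - (a + b)) := by
    rw [← sub_sub]
    exact w.lt_map_sub_of_ac_eq res ac hres_add hres_one hres_eq_zero_iff hac_mul hac_res hb0
      hb_val.symm hb_ac.symm
  exact (hmax (a + b) (K.add_mem ha hbK)).not_gt hcloser

/-- Let `(K,v) ⊆ (L,w)` be a valued field extension with angular
component map `ac` on `L`, and `x ∈ L`. If there exists `a ∈ K` such that
`γ := w(x-a) ∈ vK` is the maximum of `{w(x-k) : k ∈ K}`, then the residue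
`ac(x-a)` does not lie in the image of the residue field of `K` in `Lw`.
(As in the paper, we may use that for every `γ ∈ vK` and nonzero `r` in the residue
field of `K` there is `b ∈ K` with `w(b) = γ` and `ac(b) = r`.) -/
theorem stmt14 {L : Type*} [Field L] {Γ : Type*} [AddCommGroup Γ] [LinearOrder Γ] [IsOrderedAddMonoid Γ]
    {k : Type*} [Field k]
    (w : AddValuation L (WithTop Γ)) (res : L → k) (ac : L → k)
    -- `res` is the residue map onto the residue field `k = Lw`:
    (hres_add : ∀ x y : L, 0 ≤ w x → 0 ≤ w y → res (x + y) = res x + res y)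
    (hres_mul : ∀ x y : L, 0 ≤ w x → 0 ≤ w y → res (x * y) = res x * res y)
    (hres_one : res 1 = 1)
    (hres_eq_zero_iff : ∀ x : L, 0 ≤ w x → (res x = 0 ↔ 0 < w x))
    (hres_surj : ∀ r : k, ∃ x : L, 0 ≤ w x ∧ res x = r)
    -- `ac` is an angular component map:
    (hac_zero : ac 0 = 0)
    (hac_mul : ∀ x y : L, ac (x * y) = ac x * ac y)
    (hac_res : ∀ x : L, w x = 0 → ac x = res x)
    (K : Subfield L) (x : L) (a : L) (ha : a ∈ K)
    -- `γ = w(x-a)` lies in `vK`: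
    (hγ : ∃ u ∈ K, u ≠ 0 ∧ w u = w (x - a))
    -- and is the maximum of `{w(x-k) : k ∈ K}`:
    (hmax : ∀ b ∈ K, w (x - b) ≤ w (x - a))
    -- Fact (orthogonality) for the subfield `K`:
    (horth : ∀ γ : WithTop Γ, (∃ u ∈ K, u ≠ 0 ∧ w u = γ) →
      ∀ r : k, r ≠ 0 → (∃ c ∈ K, 0 ≤ w c ∧ res c = r) →
      ∃ b ∈ K, w b = γ ∧ ac b = r) :
    ¬ ∃ c ∈ K, 0 ≤ w c ∧ res c = ac (x - a) :=
  stmt14_general w res ac hres_add hres_one hres_eq_zero_iff hac_mul hac_res K x a ha hγ hmax horth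
end
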